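/- arXiv:2509.14908 — 2 statements merged into one kernel-verified Lean document; each statement's English description precedes it below -/
import Mathlib

section
/- The Bernoulli function B(r) = r/(e^r - 1) (with B(0)=1) is 1-Lipschitz continuous on ℝ. -/
open Real intervalIntegral

noncomputable def g (r : ℝ) : ℝ := ∫ t in (0:ℝ)..1, Real.exp (t * r)

lemma g_eq (r : ℝ) : g r = if r = 0 then 1 else (Real.exp r - 1) / r := by
  unfold g
  split
  · next h => subst h; simp
  · next h =>
    rw [intervalIntegral.integral_comp_mul_right (fun t => Real.exp t) h]
    simp [integral_exp, smul_eq_mul]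
    rw [inv_mul_eq_div]

lemma g_pos (r : ℝ) : 0 < g r := by
  rw [g_eq]
  split
  · norm_num
  · next h =>
    rcases lt_or_gt_of_ne h with hr | hr
    · apply div_pos_of_neg_of_neg _ hr
      nlinarith [Real.exp_lt_one_iff.2 hr]
    · apply div_pos _ hr
      nlinarith [Real.add_one_le_exp r]

lemma g_mono : Monotone g := by
  intro x y h
  unfold g
  apply intervalIntegral.integral_mono_on (by norm_num)
  · exact (Real.continuous_exp.comp (continuous_id.mul continuous_const)).intervalIntegrable _ _
  · exact (Real.continuous_exp.comp (continuous_id.mul continuous_const)).intervalIntegrable _ _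
  · intro t ht
    exact Real.exp_le_exp.2 (mul_le_mul_of_nonneg_left h ht.1)

noncomputable def B (r : ℝ) : ℝ := if r = 0 then 1 else r / (Real.exp r - 1)

lemma B_eq (r : ℝ) : B r = 1 / g r := by
  rw [g_eq]; unfold B
  split
  · simp
  · rw [one_div_div]

lemma B_anti : Antitone B := by
  intro x y h
  rw [B_eq, B_eq]
  exact one_div_le_one_div_of_le (g_pos x) (g_mono h)

lemma B_neg (r : ℝ) : B (-r) = B r + r := by
  unfold B
  rcases eq_or_ne r 0 with h | h
  · simp [h]
  · rw [if_neg (neg_ne_zero.2 h), if_neg h]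
    have h1 : Real.exp r - 1 ≠ 0 := by
      intro hh
      exact h (Real.exp_injective (by linarith [Real.exp_zero]) : r = 0)
    have h2 : Real.exp (-r) - 1 ≠ 0 := by
      intro hh
      exact h (neg_eq_zero.1 (Real.exp_injective (by linarith [Real.exp_zero]) : -r = 0))
    have h3 : Real.exp r ≠ 0 := Real.exp_ne_zero r
    have h4 : (1:ℝ) - Real.exp r ≠ 0 := fun hh => h1 (by linarith)
    rw [Real.exp_neg] at h2 ⊢
    field_simp
    ring

theorem bernoulli_lipschitz : LipschitzWith 1 B := by
  rw [lipschitzWith_iff_dist_le_mul]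
  intro x y
  simp only [NNReal.coe_one, one_mul, Real.dist_eq]
  wlog h : x ≤ y generalizing x y
  · rw [abs_sub_comm (B x), abs_sub_comm x]
    exact this y x (le_of_not_ge h)
  have h1 : B y ≤ B x := B_anti h
  have h2 : B x + x ≤ B y + y := by
    rw [← B_neg, ← B_neg]; exact B_anti (neg_le_neg h)
  rw [abs_sub_comm x, abs_of_nonneg (by linarith : (0:ℝ) ≤ y - x), abs_le]
  constructor <;> linarith
end

section
/- Let a,b,α₀,β₀,α₁,β₁,R be positive reals satisfying (α₀ + Rα₁)/(β₀ + Rβ₁) > a/b > α₀/β₀. Define ĉ = (1/R)(α₀ - β₀·a/b). Then ĉ < 0, α₁ + ĉ > 0, b(α₁ + ĉ)/(β₁ a) > 1, and L̂ = -(1/(Rĉ))·log(b(α₁ + ĉ)/(β₁ a)) is a positive real number. -/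
/-!
Clearing denominators, `a / b > α₀ / β₀` is exactly the sign condition `ĉ < 0`, and since
`R b ĉ = b α₀ - β₀ a`, the inequality `(α₀ + R α₁) / (β₀ + R β₁) > a / b` is exactly
`b (α₁ + ĉ) > β₁ a`. Then `L̂` is the product of `-1 / (R ĉ) > 0` and a positive logarithm.
-/

open Real

lemma travellingWave_speed_neg {a b α₀ β₀ R : ℝ} (hβ₀ : 0 < β₀) (hR : 0 < R)
    (h : a / b > α₀ / β₀) : 1 / R * (α₀ - β₀ * (a / b)) < 0 := by
  have hα₀ : α₀ < a / b * β₀ := (div_lt_iff₀ hβ₀).mp h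
  exact mul_neg_of_pos_of_neg (one_div_pos.mpr hR) (by linarith)

lemma one_lt_travellingWave_ratio {a b α₀ β₀ α₁ β₁ R : ℝ} (ha : 0 < a) (hb : 0 < b)
    (hβ₀ : 0 < β₀) (hβ₁ : 0 < β₁) (hR : 0 < R)
    (h : (α₀ + R * α₁) / (β₀ + R * β₁) > a / b) :
    1 < b * (α₁ + 1 / R * (α₀ - β₀ * (a / b))) / (β₁ * a) := by
  have hcross : a * (β₀ + R * β₁) < (α₀ + R * α₁) * b :=
    (div_lt_div_iff₀ hb (by positivity)).mp h
  have hspeed : b * (α₁ + 1 / R * (α₀ - β₀ * (a / b))) = ((α₀ + R * α₁) * b - β₀ * a) / R := by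
    field_simp
    ring
  rw [one_lt_div (by positivity), hspeed, lt_div_iff₀ hR]
  linarith

theorem travelling_wave_exists_inverse_general
    (a b α₀ β₀ α₁ β₁ R : ℝ)
    (ha : 0 < a) (hb : 0 < b) (hβ₀ : 0 < β₀)
    (hβ₁ : 0 < β₁) (hR : 0 < R)
    (h1 : (α₀ + R * α₁) / (β₀ + R * β₁) > a / b)
    (h2 : a / b > α₀ / β₀) :
    let c := (1 / R) * (α₀ - β₀ * (a / b))
    let L := -(1 / (R * c)) * Real.log (b * (α₁ + c) / (β₁ * a))
    c < 0 ∧ 0 < α₁ + c ∧ 1 < b * (α₁ + c) / (β₁ * a) ∧ 0 < L := by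
  intro c L
  have hc : c < 0 := travellingWave_speed_neg hβ₀ hR h2
  have hratio : 1 < b * (α₁ + c) / (β₁ * a) := one_lt_travellingWave_ratio ha hb hβ₀ hβ₁ hR h1
  have hα₁c : 0 < α₁ + c := by
    have hprod : β₁ * a < b * (α₁ + c) := (one_lt_div (by positivity)).mp hratio
    exact pos_of_mul_pos_right ((by positivity : 0 < β₁ * a).trans hprod) hb.le
  refine ⟨hc, hα₁c, hratio, mul_pos ?_ (log_pos hratio)⟩
  rw [neg_pos, one_div_neg]
  exact mul_neg_of_pos_of_neg hR hc

theorem travelling_wave_exists_inverse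
    (a b α₀ β₀ α₁ β₁ R : ℝ)
    (ha : 0 < a) (hb : 0 < b) (hα₀ : 0 < α₀) (hβ₀ : 0 < β₀)
    (hα₁ : 0 < α₁) (hβ₁ : 0 < β₁) (hR : 0 < R)
    (h1 : (α₀ + R * α₁) / (β₀ + R * β₁) > a / b)
    (h2 : a / b > α₀ / β₀) :
    let c := (1 / R) * (α₀ - β₀ * (a / b))
    let L := -(1 / (R * c)) * Real.log (b * (α₁ + c) / (β₁ * a))
    c < 0 ∧ 0 < α₁ + c ∧ 1 < b * (α₁ + c) / (β₁ * a) ∧ 0 < L :=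
  travelling_wave_exists_inverse_general a b α₀ β₀ α₁ β₁ R ha hb hβ₀ hβ₁ hR h1 h2
end
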